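/- arXiv:1410.8478 — 3 statements merged into one kernel-verified Lean document; each statement's English description precedes it below -/
import Mathlib

section
/- Let f* : [0, 2π] → ℂ be absolutely continuous and 2π-periodic. Then for every 0 ≤ r < 1 and φ ∈ ℝ, the φ-derivative of the Poisson integral satisfies ∂_φ P[f*](re^{iφ}) = ∫₀^{2π} P(r, x − φ) ∂_x f*(e^{ix}) dx, where P(r, t) = (1−r²)/(2π(1 − 2r cos t + r²)). -/
/-!
Substituting `x = y + ψ` and using periodicity, `P[f](ψ) = ∫₀^{2π} P(y) f(y + ψ) dy`. Writing
`f(y + ψ) - f(y) = ∫₀^ψ g(y + t) dt` and exchanging the two integrals (Fubini, made possible by the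
shear `(y, t) ↦ (y, y + t)`) gives `P[f](ψ) - P[f](0) = ∫₀^ψ P[g](t) dt`. Since the kernel is
continuous and periodic, hence bounded, `P[g]` is continuous by dominated convergence, and the
fundamental theorem of calculus yields `∂_ψ P[f] = P[g]`.
-/

open MeasureTheory Real Complex intervalIntegral

/-- The Poisson kernel of the unit disk. -/
noncomputable def stmt6PoissonKernel (r t : ℝ) : ℝ :=
  (1 - r ^ 2) / (2 * π * (1 - 2 * r * Real.cos t + r ^ 2))

open Set Function Filter
open scoped Interval

section

variable {E : Type*} [NormedAddCommGroup E] [NormedSpace ℝ E]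

theorem intervalIntegral_integral_swap [CompleteSpace E] {w : ℝ → ℝ → E} {a b c d : ℝ}
    (hw : IntegrableOn (uncurry w) ([[a, b]] ×ˢ [[c, d]])) :
    ∫ x in a..b, ∫ y in c..d, w x y = ∫ y in c..d, ∫ x in a..b, w x y := by
  have hw' : Integrable (uncurry w) ((volume.restrict (Ι a b)).prod (volume.restrict (Ι c d))) := by
    rw [Measure.prod_restrict, ← Measure.volume_eq_prod]
    exact hw.mono_set (prod_mono uIoc_subset_uIcc uIoc_subset_uIcc)
  simp only [intervalIntegral_eq_integral_uIoc, MeasureTheory.integral_smul]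
  rw [integral_integral_swap hw', smul_comm]

theorem integrableOn_uIcc_prod_comp_add {g : ℝ → E} (hg : ∀ a b, IntervalIntegrable g volume a b)
    (a b c d : ℝ) :
    IntegrableOn (fun p : ℝ × ℝ => g (p.1 + p.2)) ([[a, b]] ×ˢ [[c, d]]) := by
  set s := [[a ⊓ b + c ⊓ d, a ⊔ b + c ⊔ d]]
  have hG : Integrable (s.indicator g) :=
    ((intervalIntegrable_iff' (μ := volume)).mp (hg _ _)).integrable_indicator measurableSet_uIcc
  have hu : Integrable ([[a, b]].indicator (1 : ℝ → ℝ)) :=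
    (integrableOn_const measure_Icc_lt_top.ne).integrable_indicator measurableSet_uIcc
  have hshear := ((measurePreserving_prod_add volume volume).integrable_comp_emb
    (MeasurableEquiv.shearAddRight ℝ).measurableEmbedding).mpr (hu.smul_prod hG)
  refine hshear.integrableOn.congr_fun (fun p hp => ?_) (measurableSet_uIcc.prod measurableSet_uIcc)
  have hsum : p.1 + p.2 ∈ s := by
    obtain ⟨⟨h1, h2⟩, h3, h4⟩ := hp
    exact mem_uIcc.mpr (Or.inl ⟨add_le_add h1 h3, add_le_add h2 h4⟩)
  simp [indicator_of_mem hp.1, indicator_of_mem hsum]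

theorem continuous_of_sub_eq_intervalIntegral {f g : ℝ → E} (hg : ∀ a b, IntervalIntegrable g volume a b)
    (hfg : ∀ a b, f b - f a = ∫ x in a..b, g x) : Continuous f := by
  have hf : f = fun x => f 0 + ∫ t in (0 : ℝ)..x, g t := funext fun x => by rw [← hfg]; abel
  rw [hf]
  exact continuous_const.add (continuous_primitive hg 0)

end

section PeriodicConv

variable {𝕜 : Type*} [RCLike 𝕜] {P f g : ℝ → 𝕜} {T : ℝ}

-- The convolution over one period; for the Poisson kernel this is `P[f*](re^{iψ})`.
noncomputable def periodicConv (T : ℝ) (P f : ℝ → 𝕜) (ψ : ℝ) : 𝕜 :=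
  ∫ x in (0 : ℝ)..T, P (x - ψ) * f x

theorem periodicConv_eq_integral_comp_add (hPT : Periodic P T) (hfT : Periodic f T) (ψ : ℝ) :
    periodicConv T P f ψ = ∫ y in (0 : ℝ)..T, P y * f (y + ψ) := by
  have hper : Periodic (fun x => P (x - ψ) * f x) T := fun x => by
    simp only [add_sub_right_comm x T ψ, hPT (x - ψ), hfT x]
  have hshift := integral_comp_add_right (fun x => P (x - ψ) * f x) ψ (a := 0) (b := T)
  simp only [add_sub_cancel_right, zero_add] at hshift
  rw [periodicConv, ← zero_add T, hper.intervalIntegral_add_eq 0 ψ, zero_add, hshift, add_comm]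

theorem continuous_periodicConv (hT : T ≠ 0) (hP : Continuous P) (hPT : Periodic P T)
    (hg : IntervalIntegrable g volume 0 T) : Continuous (periodicConv T P g) := by
  obtain ⟨C, hC⟩ := isBounded_iff_forall_norm_le.mp (hPT.isBounded_of_continuous hT hP)
  refine continuous_of_dominated_interval (bound := fun x => C * ‖g x‖)
    (fun ψ => ((hP.comp (continuous_id.sub continuous_const)).aestronglyMeasurable).mul
      hg.def'.aestronglyMeasurable)
    (fun ψ => ae_of_all _ fun x _ => ?_) (hg.norm.const_mul C) (ae_of_all _ fun x _ => by fun_prop)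
  rw [norm_mul]
  exact mul_le_mul_of_nonneg_right (hC _ (mem_range_self _)) (norm_nonneg _)

theorem periodicConv_sub_periodicConv_zero (hP : Continuous P) (hPT : Periodic P T)
    (hfT : Periodic f T) (hgT : Periodic g T) (hg : ∀ a b, IntervalIntegrable g volume a b)
    (hfg : ∀ a b, f b - f a = ∫ x in a..b, g x) (ψ : ℝ) :
    periodicConv T P f ψ - periodicConv T P f 0 = ∫ t in (0 : ℝ)..ψ, periodicConv T P g t := by
  have hf := continuous_of_sub_eq_intervalIntegral hg hfg
  have hincr : ∀ y, f (y + ψ) - f y = ∫ t in (0 : ℝ)..ψ, g (y + t) := fun y => by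
    rw [hfg, integral_comp_add_left, add_zero]
  have hFubini : IntegrableOn (uncurry fun y t => P y * g (y + t)) ([[0, T]] ×ˢ [[0, ψ]]) :=
    (integrableOn_uIcc_prod_comp_add hg 0 T 0 ψ).continuousOn_mul
      (hP.comp continuous_fst).continuousOn (isCompact_uIcc.prod isCompact_uIcc)
  calc periodicConv T P f ψ - periodicConv T P f 0
      = ∫ y in (0 : ℝ)..T, P y * (f (y + ψ) - f y) := by
        rw [periodicConv_eq_integral_comp_add hPT hfT, periodicConv_eq_integral_comp_add hPT hfT,
          ← intervalIntegral.integral_sub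
          ((by fun_prop : Continuous fun y => P y * f (y + ψ)).intervalIntegrable 0 T)
          ((by fun_prop : Continuous fun y => P y * f (y + 0)).intervalIntegrable 0 T)]
        simp [mul_sub]
    _ = ∫ y in (0 : ℝ)..T, ∫ t in (0 : ℝ)..ψ, P y * g (y + t) := by
        simp_rw [hincr, intervalIntegral.integral_const_mul]
    _ = ∫ t in (0 : ℝ)..ψ, ∫ y in (0 : ℝ)..T, P y * g (y + t) :=
        intervalIntegral_integral_swap hFubini
    _ = ∫ t in (0 : ℝ)..ψ, periodicConv T P g t := by
        simp_rw [periodicConv_eq_integral_comp_add hPT hgT]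

theorem hasDerivAt_periodicConv (hT : T ≠ 0) (hP : Continuous P) (hPT : Periodic P T)
    (hfT : Periodic f T) (hgT : Periodic g T) (hg : ∀ a b, IntervalIntegrable g volume a b)
    (hfg : ∀ a b, f b - f a = ∫ x in a..b, g x) (φ : ℝ) :
    HasDerivAt (periodicConv T P f) (periodicConv T P g φ) φ := by
  have hprim := ((continuous_periodicConv hT hP hPT (hg 0 T)).integral_hasStrictDerivAt 0 φ
    ).hasDerivAt.const_add (periodicConv T P f 0)
  refine hprim.congr_of_eventuallyEq (Eventually.of_forall fun ψ => ?_)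
  dsimp only
  rw [← periodicConv_sub_periodicConv_zero hP hPT hfT hgT hg hfg, add_sub_cancel]

end PeriodicConv

theorem stmt6PoissonKernel_denom_pos {r : ℝ} (hr : |r| < 1) (t : ℝ) :
    0 < 1 - 2 * r * Real.cos t + r ^ 2 := by
  have hcos : r * Real.cos t ≤ |r| := (le_abs_self _).trans <| by
    rw [abs_mul]
    exact mul_le_of_le_one_right (abs_nonneg r) (abs_cos_le_one t)
  nlinarith [sq_abs r]

theorem continuous_stmt6PoissonKernel {r : ℝ} (hr : |r| < 1) :
    Continuous (stmt6PoissonKernel r) :=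
  continuous_const.div (by fun_prop) fun t =>
    (mul_pos two_pi_pos (stmt6PoissonKernel_denom_pos hr t)).ne'

theorem stmt6PoissonKernel_periodic (r : ℝ) : Periodic (stmt6PoissonKernel r) (2 * π) := fun t => by
  simp only [stmt6PoissonKernel, Real.cos_add_two_pi]

/-- Differentiation of the Poisson integral in the angular variable: if the
boundary function `f*` is absolutely continuous (expressed via the
fundamental theorem of calculus with integrable derivative `g`) and
`2π`-periodic, then `∂_φ P[f*](re^{iφ}) = ∫ P(r, x-φ) g(x) dx`. -/
theorem stmt_6 (f g : ℝ → ℂ)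
    (hper : ∀ x, f (x + 2 * π) = f x)
    (hgper : ∀ x, g (x + 2 * π) = g x)
    (hgint : ∀ a b : ℝ, IntervalIntegrable g volume a b)
    (hac : ∀ a b : ℝ, f b - f a = ∫ x in a..b, g x)
    (r : ℝ) (hr0 : 0 ≤ r) (hr1 : r < 1) (φ : ℝ) :
    HasDerivAt (fun ψ => ∫ x in (0:ℝ)..(2 * π), (stmt6PoissonKernel r (x - ψ) : ℂ) * f x)
      (∫ x in (0:ℝ)..(2 * π), (stmt6PoissonKernel r (x - φ) : ℂ) * g x) φ := by
  have hr : |r| < 1 := abs_lt.mpr ⟨by linarith, hr1⟩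
  exact hasDerivAt_periodicConv (P := fun t => (stmt6PoissonKernel r t : ℂ)) two_pi_pos.ne'
    (continuous_ofReal.comp (continuous_stmt6PoissonKernel hr))
    (fun t => congrArg ofReal (stmt6PoissonKernel_periodic r t)) hper hgper hgint hac φ
end

section
/- Let V : {z : 1/2 ≤ |z| ≤ 1} → ℝ be uniformly continuous and let f be C¹ on circles, with ∂_τ f(re^{iτ}) having argument V(re^{iτ}) and positive modulus. Fix ε ∈ (0, π/2) and δ > 0 such that |V(z) − V(w)| < ε whenever |z − w| < δ and 1/2 ≤ |z|,|w| ≤ 1. Then for s, t with |t − s| < δ and 1/2 ≤ r ≤ 1: |Im( (f(re^{it}) − f(re^{is}))·e^{−iV(re^{is})} )| ≤ (sin ε) ∫_s^t |∂_τ f(re^{iτ})| dτ and Re( (f(re^{it}) − f(re^{is}))·e^{−iV(re^{is})} ) ≥ (cos ε) ∫_s^t |∂_τ f(re^{iτ})| dτ, hence |arg( (f(re^{it}) − f(re^{is}))/(t−s) ) − V(re^{is})| ≤ ε. -/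
open MeasureTheory Real Complex intervalIntegral Set

/-! Rotating the chord by `e^{-iV(re^{is})}` turns it into `∫ ρ e^{iΔ}`, where the angle
`Δ(τ) = V(re^{iτ}) - V(re^{is})` stays in `[-ε, ε]` because `|re^{iτ} - re^{is}| ≤ |τ - s| < δ`.
The imaginary part of the integrand is then at most `ρ sin ε` in absolute value and its real
part at least `ρ cos ε`; integrating gives the two bounds, and their ratio bounds `tan arg`. -/

lemma abs_sin_le_sin_of_abs_le {θ ε : ℝ} (hθ : |θ| ≤ ε) (hε : ε ≤ π / 2) :
    |Real.sin θ| ≤ Real.sin ε := by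
  obtain ⟨hθl, hθu⟩ := abs_le.1 hθ
  refine abs_le.2 ⟨?_, sin_le_sin_of_le_of_le_pi_div_two (by linarith) hε hθu⟩
  rw [← Real.sin_neg]
  exact sin_le_sin_of_le_of_le_pi_div_two (by linarith) (by linarith) hθl

lemma cos_le_cos_of_abs_le {θ ε : ℝ} (hθ : |θ| ≤ ε) (hε : ε ≤ π) : Real.cos ε ≤ Real.cos θ := by
  rw [← Real.cos_abs θ]
  exact cos_le_cos_of_nonneg_of_le_pi (abs_nonneg θ) hε hθ

lemma abs_arg_le_of_abs_im_le_of_le_re {z : ℂ} {ε A : ℝ} (hε0 : 0 ≤ ε) (hε : ε < π / 2)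
    (hA : 0 < A) (him : |z.im| ≤ Real.sin ε * A) (hre : Real.cos ε * A ≤ z.re) : |arg z| ≤ ε := by
  have hcos : 0 < Real.cos ε := cos_pos_of_mem_Ioo ⟨by linarith [pi_pos], hε⟩
  have hzre : 0 < z.re := (mul_pos hcos hA).trans_le hre
  have harg : arg z = Real.arctan (z.im / z.re) := by
    obtain ⟨hl, hu⟩ := abs_lt.1 (abs_arg_lt_pi_div_two_iff.2 (Or.inl hzre))
    rw [← tan_arg, arctan_tan hl hu]
  have hslope : |z.im / z.re| ≤ Real.tan ε := by
    rw [abs_div, abs_of_pos hzre, div_le_iff₀ hzre]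
    calc |z.im| ≤ Real.sin ε * A := him
      _ = Real.tan ε * (Real.cos ε * A) := by rw [← mul_assoc, tan_mul_cos hcos.ne']
      _ ≤ Real.tan ε * z.re := by gcongr; exact tan_nonneg_of_nonneg_of_le_pi_div_two hε0 hε.le
  have hε' : Real.arctan (Real.tan ε) = ε := arctan_tan (by linarith) hε
  obtain ⟨hl, hu⟩ := abs_le.1 hslope
  rw [harg, abs_le]
  constructor
  · calc -ε = Real.arctan (-Real.tan ε) := by rw [arctan_neg, hε']
      _ ≤ _ := arctan_mono hl
  · calc Real.arctan (z.im / z.re) ≤ Real.arctan (Real.tan ε) := arctan_mono hu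
      _ = ε := hε'

lemma norm_ofReal_mul_exp_I_sub_le (r s τ : ℝ) :
    ‖(r : ℂ) * cexp (I * τ) - r * cexp (I * s)‖ ≤ |r| * |τ - s| := by
  have hfactor : (r : ℂ) * cexp (I * τ) - r * cexp (I * s)
      = r * cexp (I * s) * (cexp (I * ↑(τ - s)) - 1) := by
    rw [mul_sub, mul_one, mul_assoc, ← Complex.exp_add]
    congr 3
    push_cast
    ring
  rw [hfactor, norm_mul, norm_mul, norm_exp_I_mul_ofReal, mul_one, norm_real, Real.norm_eq_abs]
  exact mul_le_mul_of_nonneg_left norm_exp_I_mul_ofReal_sub_one_le (abs_nonneg r)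

lemma ofReal_mul_exp_I_mul_exp_neg_I (a φ ψ : ℝ) :
    (a : ℂ) * cexp (I * φ) * cexp (-I * ψ) = a * cexp (I * ↑(φ - ψ)) := by
  rw [mul_assoc, ← Complex.exp_add]
  congr 2
  push_cast
  ring

lemma abs_comp_circle_sub_lt {V : ℂ → ℝ} {ε δ r s τ : ℝ}
    (hV : ∀ z w : ℂ, 1 / 2 ≤ ‖z‖ → ‖z‖ ≤ 1 → 1 / 2 ≤ ‖w‖ → ‖w‖ ≤ 1 →
      ‖z - w‖ < δ → |V z - V w| < ε)
    (hr : 1 / 2 ≤ r) (hr1 : r ≤ 1) (hτ : |τ - s| < δ) :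
    |V (r * cexp (I * τ)) - V (r * cexp (I * s))| < ε := by
  have hnorm : ∀ x : ℝ, ‖(r : ℂ) * cexp (I * x)‖ = r := fun x => by
    rw [norm_mul, norm_exp_I_mul_ofReal, mul_one, norm_real, Real.norm_of_nonneg (by linarith)]
  refine hV _ _ (by rw [hnorm]; exact hr) (by rw [hnorm]; exact hr1) (by rw [hnorm]; exact hr)
    (by rw [hnorm]; exact hr1) ?_
  calc ‖(r : ℂ) * cexp (I * τ) - r * cexp (I * s)‖ ≤ |r| * |τ - s| :=
        norm_ofReal_mul_exp_I_sub_le r s τ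
    _ ≤ 1 * |τ - s| := by gcongr; rwa [abs_of_nonneg (by linarith)]
    _ < δ := by rwa [one_mul]

section PolarIntegral

variable {ρ θ : ℝ → ℝ} {s t ε : ℝ}

lemma re_integral_ofReal_mul_exp_I
    (h : IntervalIntegrable (fun τ => (ρ τ : ℂ) * cexp (I * θ τ)) volume s t) :
    (∫ τ in s..t, (ρ τ : ℂ) * cexp (I * θ τ)).re = ∫ τ in s..t, ρ τ * Real.cos (θ τ) := by
  rw [← RCLike.re_to_complex, ← intervalIntegral_re h]
  simp [exp_re]

lemma im_integral_ofReal_mul_exp_I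
    (h : IntervalIntegrable (fun τ => (ρ τ : ℂ) * cexp (I * θ τ)) volume s t) :
    (∫ τ in s..t, (ρ τ : ℂ) * cexp (I * θ τ)).im = ∫ τ in s..t, ρ τ * Real.sin (θ τ) := by
  rw [← RCLike.im_to_complex, ← intervalIntegral_im h]
  simp [exp_im]

lemma abs_im_integral_ofReal_mul_exp_I_le (hst : s ≤ t) (hρ : ∀ τ ∈ Icc s t, 0 ≤ ρ τ)
    (hρint : IntervalIntegrable ρ volume s t)
    (h : IntervalIntegrable (fun τ => (ρ τ : ℂ) * cexp (I * θ τ)) volume s t)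
    (hθ : ∀ τ ∈ Icc s t, |θ τ| ≤ ε) (hε : ε ≤ π / 2) :
    |(∫ τ in s..t, (ρ τ : ℂ) * cexp (I * θ τ)).im| ≤ Real.sin ε * ∫ τ in s..t, ρ τ := by
  rw [im_integral_ofReal_mul_exp_I h, ← intervalIntegral.integral_const_mul, ← Real.norm_eq_abs]
  refine norm_integral_le_of_norm_le hst (ae_of_all _ fun τ hτ => ?_) (hρint.const_mul _)
  have hτ' := Ioc_subset_Icc_self hτ
  rw [Real.norm_eq_abs, abs_mul, abs_of_nonneg (hρ τ hτ'), mul_comm]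
  exact mul_le_mul_of_nonneg_right (abs_sin_le_sin_of_abs_le (hθ τ hτ') hε) (hρ τ hτ')

lemma cos_mul_integral_le_re_integral_ofReal_mul_exp_I (hst : s ≤ t)
    (hρ : ∀ τ ∈ Icc s t, 0 ≤ ρ τ) (hρint : IntervalIntegrable ρ volume s t)
    (h : IntervalIntegrable (fun τ => (ρ τ : ℂ) * cexp (I * θ τ)) volume s t)
    (hθ : ∀ τ ∈ Icc s t, |θ τ| ≤ ε) (hε : ε ≤ π) :
    Real.cos ε * ∫ τ in s..t, ρ τ ≤ (∫ τ in s..t, (ρ τ : ℂ) * cexp (I * θ τ)).re := by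
  rw [re_integral_ofReal_mul_exp_I h, ← intervalIntegral.integral_const_mul]
  have hre : IntervalIntegrable (fun τ => ρ τ * Real.cos (θ τ)) volume s t := by
    have hfun : (fun τ => ρ τ * Real.cos (θ τ))
        = fun τ => RCLike.re ((ρ τ : ℂ) * cexp (I * θ τ)) := by
      ext τ
      simp [exp_re]
    rw [hfun]
    exact ⟨h.1.re, h.2.re⟩
  refine integral_mono_on hst (hρint.const_mul _) hre fun τ hτ => ?_
  rw [mul_comm]
  exact mul_le_mul_of_nonneg_left (cos_le_cos_of_abs_le (hθ τ hτ) hε) (hρ τ hτ)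

end PolarIntegral

theorem stmt_12_general (f : ℂ → ℂ) (V : ℂ → ℝ) (ρ : ℝ → ℝ → ℝ)
    (ε δ : ℝ) (hε0 : 0 < ε) (hεπ : ε < π / 2)
    (hV : ∀ z w : ℂ, 1 / 2 ≤ ‖z‖ → ‖z‖ ≤ 1 →
      1 / 2 ≤ ‖w‖ → ‖w‖ ≤ 1 →
      ‖z - w‖ < δ → |V z - V w| < ε)
    (r s t : ℝ) (hr : 1 / 2 ≤ r) (hr1 : r ≤ 1) (hst : s < t) (hts : t - s < δ)
    (hρpos : ∀ τ, 0 < ρ r τ)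
    (hρint : IntervalIntegrable (fun τ => ρ r τ) volume s t)
    (hρeint : IntervalIntegrable
      (fun τ => (ρ r τ : ℂ) * Complex.exp (Complex.I * V (r * Complex.exp (Complex.I * τ)))) volume s t)
    (hchord : f (r * Complex.exp (Complex.I * t)) - f (r * Complex.exp (Complex.I * s))
      = ∫ τ in s..t, (ρ r τ : ℂ) * Complex.exp (Complex.I * V (r * Complex.exp (Complex.I * τ)))) :
    |((f (r * Complex.exp (Complex.I * t)) - f (r * Complex.exp (Complex.I * s))) *
        Complex.exp (-Complex.I * V (r * Complex.exp (Complex.I * s)))).im|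
        ≤ Real.sin ε * ∫ τ in s..t, ρ r τ
    ∧ Real.cos ε * ∫ τ in s..t, ρ r τ
        ≤ ((f (r * Complex.exp (Complex.I * t)) - f (r * Complex.exp (Complex.I * s))) *
            Complex.exp (-Complex.I * V (r * Complex.exp (Complex.I * s)))).re
    ∧ |Complex.arg ((f (r * Complex.exp (Complex.I * t)) - f (r * Complex.exp (Complex.I * s))) *
          Complex.exp (-Complex.I * V (r * Complex.exp (Complex.I * s))))| ≤ ε := by
  set Δ : ℝ → ℝ := fun τ => V (r * cexp (I * τ)) - V (r * cexp (I * s))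
  have hchord' : (f (r * cexp (I * t)) - f (r * cexp (I * s))) * cexp (-I * V (r * cexp (I * s)))
      = ∫ τ in s..t, (ρ r τ : ℂ) * cexp (I * Δ τ) := by
    simp only [hchord, ← intervalIntegral.integral_mul_const, ofReal_mul_exp_I_mul_exp_neg_I, Δ]
  have hint : IntervalIntegrable (fun τ => (ρ r τ : ℂ) * cexp (I * Δ τ)) volume s t := by
    simpa only [ofReal_mul_exp_I_mul_exp_neg_I] using
      hρeint.mul_const (cexp (-I * V (r * cexp (I * s))))
  have hΔ : ∀ τ ∈ Icc s t, |Δ τ| ≤ ε := fun τ hτ => by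
    refine (abs_comp_circle_sub_lt hV hr hr1 ?_).le
    rw [abs_of_nonneg (by linarith [hτ.1])]
    linarith [hτ.2]
  have hρ : ∀ τ ∈ Icc s t, 0 ≤ ρ r τ := fun τ _ => (hρpos τ).le
  have him := abs_im_integral_ofReal_mul_exp_I_le hst.le hρ hρint hint hΔ hεπ.le
  have hre := cos_mul_integral_le_re_integral_ofReal_mul_exp_I hst.le hρ hρint hint hΔ
    (by linarith [pi_pos])
  rw [hchord']
  exact ⟨him, hre, abs_arg_le_of_abs_im_le_of_le_re hε0.le hεπ
    (intervalIntegral_pos_of_pos hρint hρpos hst) him hre⟩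

/-- Key computation in part (b) of the Lindelöf theorem for harmonic q.c.
maps: if the tangent direction `V` oscillates by less than `ε` at scale `δ`,
then the chord `f(re^{it}) - f(re^{is})` makes an angle at most `ε` with
`e^{iV(re^{is})}`. -/
theorem stmt_12 (f : ℂ → ℂ) (V : ℂ → ℝ) (ρ : ℝ → ℝ → ℝ)
    (ε δ : ℝ) (hε0 : 0 < ε) (hεπ : ε < π / 2) (hδ : 0 < δ)
    (hV : ∀ z w : ℂ, 1 / 2 ≤ ‖z‖ → ‖z‖ ≤ 1 →
      1 / 2 ≤ ‖w‖ → ‖w‖ ≤ 1 →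
      ‖z - w‖ < δ → |V z - V w| < ε)
    (r s t : ℝ) (hr : 1 / 2 ≤ r) (hr1 : r ≤ 1) (hst : s < t) (hts : t - s < δ)
    (hρpos : ∀ τ, 0 < ρ r τ)
    (hρint : IntervalIntegrable (fun τ => ρ r τ) volume s t)
    (hρeint : IntervalIntegrable
      (fun τ => (ρ r τ : ℂ) * Complex.exp (Complex.I * V (r * Complex.exp (Complex.I * τ)))) volume s t)
    (hchord : f (r * Complex.exp (Complex.I * t)) - f (r * Complex.exp (Complex.I * s))
      = ∫ τ in s..t, (ρ r τ : ℂ) * Complex.exp (Complex.I * V (r * Complex.exp (Complex.I * τ)))) :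
    |((f (r * Complex.exp (Complex.I * t)) - f (r * Complex.exp (Complex.I * s))) *
        Complex.exp (-Complex.I * V (r * Complex.exp (Complex.I * s)))).im|
        ≤ Real.sin ε * ∫ τ in s..t, ρ r τ
    ∧ Real.cos ε * ∫ τ in s..t, ρ r τ
        ≤ ((f (r * Complex.exp (Complex.I * t)) - f (r * Complex.exp (Complex.I * s))) *
            Complex.exp (-Complex.I * V (r * Complex.exp (Complex.I * s)))).re
    ∧ |Complex.arg ((f (r * Complex.exp (Complex.I * t)) - f (r * Complex.exp (Complex.I * s))) *
          Complex.exp (-Complex.I * V (r * Complex.exp (Complex.I * s))))| ≤ ε :=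
  stmt_12_general f V ρ ε δ hε0 hεπ hV r s t hr hr1 hst hts hρpos hρint hρeint hchord
end

section
/- Let a, b : U → ℂ be holomorphic on the unit disk with |b'(z)| ≤ k|a'(z)| for all z and 0 ≤ k < 1, and suppose a'(0) ≠ 0 with (1−k)|a'(0)| ≥ 1. If t ↦ a(e^{it}) + conj(b(e^{it})) is absolutely continuous with derivative ∂_t f(e^{it}) = i e^{it} a'(e^{it}) + conj(i e^{it} b'(e^{it})) ∈ L¹, then ∫₀^{2π} log|∂_t f(e^{it})| dt/(2π) ≥ log[(1−k)|a'(0)|] ≥ 0. -/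
open Complex Real MeasureTheory Metric
open scoped ComplexConjugate

/-! On the unit circle `|∂_t f| ≥ (1 - k)|a'|`, and since `a'` has no zeros on the closed disk,
`log ‖(1 - k) a'‖` is harmonic there, so its circle average equals its value `log ((1 - k)|a'(0)|)`
at the centre. -/

theorem Complex.one_sub_mul_norm_le_norm_add_conj {u v : ℂ} {k : ℝ} (h : ‖v‖ ≤ k * ‖u‖) :
    (1 - k) * ‖u‖ ≤ ‖u + conj v‖ := by
  have := norm_sub_le (u + conj v) (conj v)
  rw [add_sub_cancel_right, norm_conj] at this
  linarith

theorem AnalyticOnNhd.log_norm_le_circleAverage {A : ℂ → ℂ} {φ : ℂ → ℝ} {c : ℂ} {r : ℝ}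
    (hA : AnalyticOnNhd ℂ A (closedBall c |r|)) (hA₀ : ∀ z ∈ closedBall c |r|, A z ≠ 0)
    (hφ : CircleIntegrable φ c r) (hle : ∀ z ∈ sphere c |r|, Real.log ‖A z‖ ≤ φ z) :
    Real.log ‖A c‖ ≤ circleAverage φ c r := by
  rw [← hA.circleAverage_log_norm_of_ne_zero hA₀]
  exact circleAverage_mono
    (hA.mono sphere_subset_closedBall).meromorphicOn.circleIntegrable_log_norm hφ hle

/-- With `A = a'`, `B = b'`, the integrand is `log |∂_t (a + conj b)(r e^{it})|` at `z = r e^{it}`. -/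
theorem log_le_circleAverage_log_norm_add_conj {A B : ℂ → ℂ} {k r : ℝ} (hk : k < 1) (hr : r ≠ 0)
    (hA : AnalyticOnNhd ℂ A (closedBall 0 |r|)) (hA₀ : ∀ z ∈ closedBall 0 |r|, A z ≠ 0)
    (hB : ContinuousOn B (sphere 0 |r|)) (hBA : ∀ z ∈ sphere 0 |r|, ‖B z‖ ≤ k * ‖A z‖) :
    Real.log ((1 - k) * |r| * ‖A 0‖) ≤
      circleAverage (fun z ↦ Real.log ‖I * z * A z + conj (I * z * B z)‖) 0 r := by
  have hc : 0 < (1 - k) * |r| := mul_pos (sub_pos.2 hk) (abs_pos.2 hr)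
  have hbound : ∀ z ∈ sphere (0 : ℂ) |r|,
      (1 - k) * |r| * ‖A z‖ ≤ ‖I * z * A z + conj (I * z * B z)‖ := by
    intro z hz
    have hz' : ‖z‖ = |r| := by simpa using hz
    refine le_of_eq_of_le ?_ (one_sub_mul_norm_le_norm_add_conj (u := I * z * A z) (k := k) ?_)
    · simp [hz', mul_assoc]
    · simp only [norm_mul, norm_I, one_mul, hz']
      nlinarith [hBA z hz, abs_nonneg r]
  have hpos : ∀ z ∈ sphere (0 : ℂ) |r|, 0 < (1 - k) * |r| * ‖A z‖ := fun z hz ↦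
    mul_pos hc (norm_pos_iff.2 (hA₀ z (sphere_subset_closedBall hz)))
  have hcont : ContinuousOn (fun z ↦ ‖I * z * A z + conj (I * z * B z)‖) (sphere 0 |r|) := by
    have := hA.continuousOn.mono sphere_subset_closedBall
    fun_prop
  convert (analyticOnNhd_const (v := (((1 - k) * |r| : ℝ) : ℂ))).mul hA
    |>.log_norm_le_circleAverage ?_ ?_ ?_ using 1
  · rw [norm_mul, norm_real, Real.norm_of_nonneg hc.le]
  · exact fun z hz ↦ mul_ne_zero (ofReal_ne_zero.2 hc.ne') (hA₀ z hz)
  · exact (hcont.log fun z hz ↦ (hpos z hz |>.trans_le (hbound z hz)).ne').circleIntegrable'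
  · intro z hz
    rw [norm_mul, norm_real, Real.norm_of_nonneg hc.le]
    exact Real.log_le_log (hpos z hz) (hbound z hz)

theorem stmt_17_general (a b : ℂ → ℂ) (R : ℝ) (hR : 1 < R)
    (ha : DifferentiableOn ℂ a (ball (0 : ℂ) R))
    (hb : DifferentiableOn ℂ b (ball (0 : ℂ) R))
    (k : ℝ) (hk1 : k < 1)
    (hqc : ∀ z ∈ ball (0 : ℂ) R,
      norm (deriv b z) ≤ k * norm (deriv a z))
    (hane : ∀ z ∈ closedBall (0 : ℂ) 1, deriv a z ≠ 0)
    (hnorm : 1 ≤ (1 - k) * norm (deriv a 0)) :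
    Real.log ((1 - k) * norm (deriv a 0))
        ≤ (∫ t in (0:ℝ)..(2 * π),
            Real.log (norm
              (Complex.I * Complex.exp (Complex.I * t) * deriv a (Complex.exp (Complex.I * t)) +
                (starRingEnd ℂ)
                  (Complex.I * Complex.exp (Complex.I * t) * deriv b (Complex.exp (Complex.I * t)))))) / (2 * π)
      ∧ 0 ≤ Real.log ((1 - k) * norm (deriv a 0)) := by
  refine ⟨?_, Real.log_nonneg hnorm⟩
  have hdisk : closedBall (0 : ℂ) |1| ⊆ ball 0 R := by
    simpa using closedBall_subset_ball hR
  have hsphere : sphere (0 : ℂ) |1| ⊆ ball 0 R := sphere_subset_closedBall.trans hdisk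
  have key := log_le_circleAverage_log_norm_add_conj hk1 one_ne_zero
    ((ha.analyticOnNhd isOpen_ball).deriv.mono hdisk) (by simpa using hane)
    ((hb.analyticOnNhd isOpen_ball).deriv.continuousOn.mono hsphere)
    (fun z hz ↦ hqc z (hsphere hz))
  simpa [circleAverage_def, circleMap_zero, mul_comm _ I, div_eq_inv_mul] using key

/-- Sub-mean-value estimate for `log |∂_t f|` with `f = a + conj b` harmonic
and `k`-quasiconformal: the average of `log |∂_t f(e^{it})|` over the circle
is at least `log ((1-k)|a'(0)|) ≥ 0`. -/
theorem stmt_17 (a b : ℂ → ℂ) (R : ℝ) (hR : 1 < R)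
    (ha : DifferentiableOn ℂ a (ball (0 : ℂ) R))
    (hb : DifferentiableOn ℂ b (ball (0 : ℂ) R))
    (k : ℝ) (hk0 : 0 ≤ k) (hk1 : k < 1)
    (hqc : ∀ z ∈ ball (0 : ℂ) R,
      norm (deriv b z) ≤ k * norm (deriv a z))
    (hane : ∀ z ∈ closedBall (0 : ℂ) 1, deriv a z ≠ 0)
    (hnorm : 1 ≤ (1 - k) * norm (deriv a 0)) :
    Real.log ((1 - k) * norm (deriv a 0))
        ≤ (∫ t in (0:ℝ)..(2 * π),
            Real.log (norm
              (Complex.I * Complex.exp (Complex.I * t) * deriv a (Complex.exp (Complex.I * t)) +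
                (starRingEnd ℂ)
                  (Complex.I * Complex.exp (Complex.I * t) * deriv b (Complex.exp (Complex.I * t)))))) / (2 * π)
      ∧ 0 ≤ Real.log ((1 - k) * norm (deriv a 0)) :=
  stmt_17_general a b R hR ha hb k hk1 hqc hane hnorm
end
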